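/- arXiv:1702.05365 — 4 statements merged into one kernel-verified Lean document; each statement's English description precedes it below -/
import Mathlib

section
/- The polynomial l1(z,w) = z + (i b/12) z^2 + (i b/6) z w + (i b/12) w^2 is a Darboux factor with cofactor k1 = 1 - (i b/6) z - (i b/6) w for the complex system ż = z + (1/72)(-18 i b z² + 18 i b w² + b² z³ + 3 b² z² w + 3 b² z w² + b² w³), ẇ = -w + (1/72)(18 i b z² - 18 i b w² - b² z³ - 3 b² z² w - 3 b² z w² - b² w³); that is, (∂l1/∂z)·ż + (∂l1/∂w)·ẇ = k1 · l1 identically as polynomials in z, w over ℂ. -/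
open Complex

theorem deriv_quadratic {𝕜 : Type*} [NontriviallyNormedField 𝕜] (a c d x : 𝕜) :
    deriv (fun y => a + c * y + d * y ^ 2) x = c + 2 * d * x := by
  have h : HasDerivAt (fun y => a + c * y + d * y ^ 2) (c * 1 + d * (2 * x)) x :=
    (((hasDerivAt_id x).const_mul c).const_add a).add
      (by simpa using (hasDerivAt_pow 2 x).const_mul d)
  rw [h.deriv]
  ring

/-- The polynomial `l1` is a Darboux factor with cofactor `k1` for the complex system. -/
theorem stmt0 (b z w : ℂ) :
    deriv (fun z' : ℂ => z' + (I*b/12)*z'^2 + (I*b/6)*z'*w + (I*b/12)*w^2) z *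
      (z + (1/72)*(-18*I*b*z^2 + 18*I*b*w^2 + b^2*z^3 + 3*b^2*z^2*w + 3*b^2*z*w^2 + b^2*w^3)) +
    deriv (fun w' : ℂ => z + (I*b/12)*z^2 + (I*b/6)*z*w' + (I*b/12)*w'^2) w *
      (-w + (1/72)*(18*I*b*z^2 - 18*I*b*w^2 - b^2*z^3 - 3*b^2*z^2*w - 3*b^2*z*w^2 - b^2*w^3)) =
    (1 - (I*b/6)*z - (I*b/6)*w) *
      (z + (I*b/12)*z^2 + (I*b/6)*z*w + (I*b/12)*w^2) := by
  have hz : deriv (fun z' : ℂ => z' + (I*b/12)*z'^2 + (I*b/6)*z'*w + (I*b/12)*w^2) z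
      = 1 + (I*b/6)*z + (I*b/6)*w := by
    rw [show (fun z' : ℂ => z' + (I*b/12)*z'^2 + (I*b/6)*z'*w + (I*b/12)*w^2)
        = fun y => (I*b/12)*w^2 + (1 + (I*b/6)*w) * y + (I*b/12) * y^2 by funext; ring,
      deriv_quadratic]
    ring
  have hw : deriv (fun w' : ℂ => z + (I*b/12)*z^2 + (I*b/6)*z*w' + (I*b/12)*w'^2) w
      = (I*b/6)*z + (I*b/6)*w := by
    rw [show (fun w' : ℂ => z + (I*b/12)*z^2 + (I*b/6)*z*w' + (I*b/12)*w'^2)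
        = fun y => (z + (I*b/12)*z^2) + (I*b/6)*z * y + (I*b/12) * y^2 by funext; ring,
      deriv_quadratic]
    ring
  rw [hz, hw]
  linear_combination (b^2*z^3/72 + b^2*z^2*w/24 + b^2*z*w^2/24 + b^2*w^3/72) * I_sq
end

section
/- The polynomial l3(z,w) = 1 - (i b/6) z + (b²/36) z² + (i b/6) w + (b²/18) z w + (b²/36) w² is a Darboux factor with cofactor k3 = -(i b/6) z - (i b/6) w for the system ż = z + (1/72)(-18 i b z² + 18 i b w² + b² z³ + 3 b² z² w + 3 b² z w² + b² w³), ẇ = -w + (1/72)(18 i b z² - 18 i b w² - b² z³ - 3 b² z² w - 3 b² z w² - b² w³), i.e. (∂l3/∂z)·ż + (∂l3/∂w)·ẇ = k3 · l3 as polynomials over ℂ. -/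
/-!
In the coordinates `s = z + w`, `d = z - w` the factor reads `l3 = 1 - (i b/6) d + (b²/36) s²`
and the system becomes `ṡ = d`, `ḋ = s - (i b/2) s d + (b²/36) s³`. Hence
`l̇3 = -(i b/6) s - (b²/36) s d - (i b³/216) s³ = -(i b/6) s · l3`, and `k3 = -(i b/6) s`.
-/

open Complex

theorem hasDerivAt_quadratic {𝕜 : Type*} [NontriviallyNormedField 𝕜] (a c d x : 𝕜) :
    HasDerivAt (fun y => a + c * y + d * y ^ 2) (c + 2 * d * x) x :=
  ((((hasDerivAt_id' x).const_mul c).const_add a).add ((hasDerivAt_pow 2 x).const_mul d)).congr_deriv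
    (by ring)

noncomputable section

namespace DarbouxL3

variable (b z w : ℂ)

def l3 : ℂ := 1 - (I*b/6)*z + (b^2/36)*z^2 + (I*b/6)*w + (b^2/18)*z*w + (b^2/36)*w^2

def fieldZ : ℂ := z + (1/72)*(-18*I*b*z^2 + 18*I*b*w^2 + b^2*z^3 + 3*b^2*z^2*w + 3*b^2*z*w^2 + b^2*w^3)

def fieldW : ℂ := -w + (1/72)*(18*I*b*z^2 - 18*I*b*w^2 - b^2*z^3 - 3*b^2*z^2*w - 3*b^2*z*w^2 - b^2*w^3)

def k3 : ℂ := -(I*b/6)*z - (I*b/6)*w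

theorem hasDerivAt_l3_fst :
    HasDerivAt (fun z' => l3 b z' w) (-(I*b/6) + (b^2/18)*(z + w)) z := by
  refine ((hasDerivAt_quadratic (1 + (I*b/6)*w + (b^2/36)*w^2) (-(I*b/6) + (b^2/18)*w) (b^2/36) z
    ).congr_deriv (by ring)).congr_of_eventuallyEq (.of_eq (funext fun z' => ?_))
  simp only [l3]
  ring

theorem hasDerivAt_l3_snd :
    HasDerivAt (fun w' => l3 b z w') (I*b/6 + (b^2/18)*(z + w)) w := by
  refine ((hasDerivAt_quadratic (1 - (I*b/6)*z + (b^2/36)*z^2) (I*b/6 + (b^2/18)*z) (b^2/36) w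
    ).congr_deriv (by ring)).congr_of_eventuallyEq (.of_eq (funext fun w' => ?_))
  simp only [l3]
  ring

theorem darboux_identity :
    (-(I*b/6) + (b^2/18)*(z + w)) * fieldZ b z w + (I*b/6 + (b^2/18)*(z + w)) * fieldW b z w =
      k3 b z w * l3 b z w := by
  simp only [fieldZ, fieldW, k3, l3]
  linear_combination (b^2*z^2/18 - b^2*w^2/18) * I_sq

end DarbouxL3

end

open DarbouxL3 in
/-- The polynomial `l3` is a Darboux factor with cofactor `k3` for the complex system. -/
theorem stmt1 (b z w : ℂ) :
    deriv (fun z' : ℂ => 1 - (I*b/6)*z' + (b^2/36)*z'^2 + (I*b/6)*w + (b^2/18)*z'*w + (b^2/36)*w^2) z *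
      (z + (1/72)*(-18*I*b*z^2 + 18*I*b*w^2 + b^2*z^3 + 3*b^2*z^2*w + 3*b^2*z*w^2 + b^2*w^3)) +
    deriv (fun w' : ℂ => 1 - (I*b/6)*z + (b^2/36)*z^2 + (I*b/6)*w' + (b^2/18)*z*w' + (b^2/36)*w'^2) w *
      (-w + (1/72)*(18*I*b*z^2 - 18*I*b*w^2 - b^2*z^3 - 3*b^2*z^2*w - 3*b^2*z*w^2 - b^2*w^3)) =
    (-(I*b/6)*z - (I*b/6)*w) *
      (1 - (I*b/6)*z + (b^2/36)*z^2 + (I*b/6)*w + (b^2/18)*z*w + (b^2/36)*w^2) := by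
  change deriv (fun z' => l3 b z' w) z * fieldZ b z w + deriv (fun w' => l3 b z w') w * fieldW b z w =
    k3 b z w * l3 b z w
  rw [(hasDerivAt_l3_fst b z w).deriv, (hasDerivAt_l3_snd b z w).deriv]
  exact darboux_identity b z w
end

section
/- Let P(z,w) = z + (1/36)(-9c z² + 18c z w - 9c w² - 2c² z³ + 6c² z² w - 6c² z w² + 2c² w³) and Q(z,w) = -w + (1/36)(9c z² - 18c z w + 9c w² - 2c² z³ + 6c² z² w - 6c² z w² + 2c² w³). Then the polynomial l1(z,w) = z - (c/12) z² + (c/6) z w - (c/12) w² is a Darboux factor: there exists a polynomial K1 of degree ≤ 2 such that (∂l1/∂z)·P + (∂l1/∂w)·Q = K1·l1. -/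
open Complex

/-- `l1 = z - (c/12)z² + (c/6)zw - (c/12)w²` is a Darboux factor of the system (P,Q):
there is a polynomial cofactor `K1` of degree ≤ 2. -/
theorem stmt3 (c : ℂ) :
    ∃ a00 a10 a01 a20 a11 a02 : ℂ, ∀ z w : ℂ,
      deriv (fun z' : ℂ => z' - (c/12)*z'^2 + (c/6)*z'*w - (c/12)*w^2) z *
        (z + (1/36)*(-9*c*z^2 + 18*c*z*w - 9*c*w^2 - 2*c^2*z^3 + 6*c^2*z^2*w
          - 6*c^2*z*w^2 + 2*c^2*w^3)) +
      deriv (fun w' : ℂ => z - (c/12)*z^2 + (c/6)*z*w' - (c/12)*w'^2) w *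
        (-w + (1/36)*(9*c*z^2 - 18*c*z*w + 9*c*w^2 - 2*c^2*z^3 + 6*c^2*z^2*w
          - 6*c^2*z*w^2 + 2*c^2*w^3)) =
      (a00 + a10*z + a01*w + a20*z^2 + a11*z*w + a02*w^2) *
        (z - (c/12)*z^2 + (c/6)*z*w - (c/12)*w^2) := by
  refine ⟨1, -(c/3), c/3, 0, 0, 0, fun z w => ?_⟩
  have h1 : deriv (fun z' : ℂ => z' - (c/12)*z'^2 + (c/6)*z'*w - (c/12)*w^2) z
      = 1 - (c/12)*(2*z) + (c/6)*w := by
    have : HasDerivAt (fun z' : ℂ => z' - (c/12)*z'^2 + (c/6)*z'*w - (c/12)*w^2)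
        (1 - (c/12)*(2*z) + (c/6)*w) z := by
      have := (((hasDerivAt_id z).sub (((hasDerivAt_pow 2 z).const_mul (c/12)))).add
        (((hasDerivAt_id z).mul_const w).const_mul (c/6))).sub_const ((c/12)*w^2)
      simpa [mul_assoc] using this
    exact this.deriv
  have h2 : deriv (fun w' : ℂ => z - (c/12)*z^2 + (c/6)*z*w' - (c/12)*w'^2) w
      = (c/6)*z - (c/12)*(2*w) := by
    have : HasDerivAt (fun w' : ℂ => z - (c/12)*z^2 + (c/6)*z*w' - (c/12)*w'^2)
        ((c/6)*z - (c/12)*(2*w)) w := by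
      have := ((hasDerivAt_const w (z - (c/12)*z^2)).add
        ((hasDerivAt_id w).const_mul ((c/6)*z))).sub
        ((hasDerivAt_pow 2 w).const_mul (c/12))
      simpa [mul_assoc, Pi.add_def, Pi.sub_def] using this
    exact this.deriv
  rw [h1, h2]; ring
end

section
/- Let b ∈ ℝ with b ≠ 0 and set a² = (35/94 + (3/94)√721) b² (so that 47a⁴ - 35a²b² - 28b⁴ = 0) and b₃₀ = (10a² + 10b²)/9. Then the third period coefficient p₆ = 136136a⁶ + 38808a⁴b² + 13080a²b⁴ + 165704b⁶ + 58212a⁴b₃₀ - 17496a²b²b₃₀ - 546588b⁴b₃₀ - 2106a²b₃₀² + 341334b²b₃₀² - 15309b₃₀³ is a nonzero multiple of b⁶; specifically p₆ is nonzero (indeed p₆ = (c₀ + c₁√721) b⁶ for some explicit positive rational constants with c₀ + c₁√721 ≠ 0). -/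
/-!
Substituting `b₃₀ = (10a² + 10b²)/9` turns `p₆` into `64 b⁶ q(r)` for the cubic
`q(r) = 2769r³ + 6832r² + 2555r - 644` in the ratio `r = a²/b²`. That ratio is the positive root of
`47r² - 35r - 28`, so `q(r)` reduces to a linear expression in `r`, and substituting
`r = (35 + 3√721)/94` gives `p₆ = (c₀ + c₁√721) b⁶` with `c₀, c₁ > 0`.
-/

open Real

/-- The third period coefficient `p₆`, in the parameters `a = a₀₂`, `b = b₂₀`, `b30 = b₃₀`. -/
def periodCoeff6 (a b b30 : ℝ) : ℝ :=
  136136*a^6 + 38808*a^4*b^2 + 13080*a^2*b^4 + 165704*b^6 + 58212*a^4*b30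
    - 17496*a^2*b^2*b30 - 546588*b^4*b30 - 2106*a^2*b30^2 + 341334*b^2*b30^2
    - 15309*b30^3

lemma periodCoeff6_eq_cubic_of_sq_eq_mul {a b r : ℝ} (ha : a^2 = r * b^2) :
    periodCoeff6 a b ((10*a^2 + 10*b^2)/9)
      = 64 * (2769*r^3 + 6832*r^2 + 2555*r - 644) * b^6 := by
  unfold periodCoeff6
  rw [show a^6 = (a^2)^3 by ring, show a^4 = (a^2)^2 by ring, ha]
  ring

lemma cubic_eq_linear_of_quadratic {r : ℝ} (hr : 47*r^2 = 35*r + 28) :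
    2769*r^3 + 6832*r^2 + 2555*r - 644 = (23918664*r + 10281936) / 2209 := by
  linear_combination (2769/47 * r + 418019/2209) * hr

lemma quadratic_of_eq_root {r : ℝ} (hr : r = 35/94 + (3/94) * √721) :
    47*r^2 = 35*r + 28 := by
  have h721 : √721 ^ 2 = 721 := sq_sqrt (by norm_num)
  subst hr
  linear_combination (9/188) * h721

/-- With `b ≠ 0`, `a² = (35/94 + (3/94)√721)b²` and `b₃₀ = (10a² + 10b²)/9`,
the third period coefficient `p₆` is a nonzero multiple of `b⁶`:
`p₆ = (c₀ + c₁√721)b⁶` for some positive rationals `c₀, c₁`, and `p₆ ≠ 0`. -/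
theorem stmt10 (a b b30 : ℝ) (hb : b ≠ 0)
    (ha : a^2 = (35/94 + (3/94)*Real.sqrt 721)*b^2)
    (h30 : b30 = (10*a^2 + 10*b^2)/9) :
    (∃ c0 c1 : ℚ, 0 < c0 ∧ 0 < c1 ∧
      136136*a^6 + 38808*a^4*b^2 + 13080*a^2*b^4 + 165704*b^6 + 58212*a^4*b30
        - 17496*a^2*b^2*b30 - 546588*b^4*b30 - 2106*a^2*b30^2 + 341334*b^2*b30^2
        - 15309*b30^3 = ((c0 : ℝ) + (c1 : ℝ)*Real.sqrt 721)*b^6) ∧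
    136136*a^6 + 38808*a^4*b^2 + 13080*a^2*b^4 + 165704*b^6 + 58212*a^4*b30
      - 17496*a^2*b^2*b30 - 546588*b^4*b30 - 2106*a^2*b30^2 + 341334*b^2*b30^2
      - 15309*b30^3 ≠ 0 := by
  have hp : periodCoeff6 a b b30
      = (((57716967168/103823 : ℚ) : ℝ) + ((2296191744/103823 : ℚ) : ℝ) * √721) * b^6 := by
    rw [h30, periodCoeff6_eq_cubic_of_sq_eq_mul ha,
      cubic_eq_linear_of_quadratic (quadratic_of_eq_root rfl)]
    push_cast
    ring
  refine ⟨⟨_, _, by norm_num, by norm_num, hp⟩, ?_⟩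
  change periodCoeff6 a b b30 ≠ 0
  rw [hp]
  push_cast
  positivity
end
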